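/- arXiv:2409.10970 — 3 statements merged into one kernel-verified Lean document; each statement's English description precedes it below -/
import Mathlib

section
/- Let H, Q be symmetric real (hm)×(hm) matrices with H ⪰ λ_H·I and Q ⪰ ε_Q·I for constants λ_H, ε_Q > 0, let Z be an (hm)×n real matrix with ‖Z‖ ≤ c, let P be a symmetric n×n matrix with P ⪰ ε_P·I, and let κ > 0. Then the block matrix M = [[P + κ·Zᵀ Q Z, κ·Zᵀ Q H], [κ·H Q Z, κ·H Q H]] is positive definite, and moreover for any ε with 0 < ε < κ ε_Q λ_H² and c²·κ·ε_Q·ε/(κ ε_Q λ_H² − ε) + ε ≤ ε_P, one has M ⪰ ε·I. -/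
/-!
In coordinates `v = (x, y)` the quadratic form of `M` is `xᵀ P x + κ wᵀ Q w` with `w = Z x + H y`,
i.e. `M = M_P + κ Bᵀ Q B` for `B = [Z H]`. By Young's inequality with weight `t = ε / (κ ε_Q λ_H²)`,
`|w|² ≥ t |H y|² - t / (1 - t) |Z x|² ≥ t λ_H² |y|² - t / (1 - t) c² |x|²`.
The choice of `t` makes `κ ε_Q t λ_H² = ε`, so the `y`-part of the form is at least `ε |y|²`, and the
constraint on `ε` says precisely that `ε_P |x|²` pays for both the `Z`-term and `ε |x|²`.
Positive definiteness follows because that constraint holds for all small `ε > 0`.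
-/

open Matrix Topology

theorem le_dotProduct_add_self_of_lt_one {ι : Type*} [Fintype ι] (a b : ι → ℝ) {t : ℝ}
    (ht : t < 1) : t * (b ⬝ᵥ b) - t / (1 - t) * (a ⬝ᵥ a) ≤ (a + b) ⬝ᵥ (a + b) := by
  have hsq : 0 ≤ ((1 - t) • b + a) ⬝ᵥ ((1 - t) • b + a) := by
    simpa using dotProduct_star_self_nonneg ((1 - t) • b + a)
  simp only [add_dotProduct, dotProduct_add, smul_dotProduct, dotProduct_smul, smul_eq_mul,
    dotProduct_comm b a] at hsq ⊢
  rw [div_mul_eq_mul_div, sub_le_iff_le_add, ← sub_le_iff_le_add', le_div_iff₀ (sub_pos.mpr ht)]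
  nlinarith

theorem exists_pos_mul_div_sub_add_le (a b : ℝ) {d : ℝ} (ha : 0 < a) (hd : 0 < d) :
    ∃ ε, 0 < ε ∧ ε < a ∧ b * ε / (a - ε) + ε ≤ d := by
  have hcont : ContinuousAt (fun ε => b * ε / (a - ε) + ε) 0 := by
    fun_prop (disch := simp [ha.ne'])
  have hsmall : ∀ᶠ ε in 𝓝 (0 : ℝ), b * ε / (a - ε) + ε < d ∧ ε < a :=
    (hcont.eventually (gt_mem_nhds (by simpa using hd))).and (gt_mem_nhds ha)
  obtain ⟨ε, ⟨hεd, hεa⟩, hε⟩ := ((hsmall.filter_mono nhdsWithin_le_nhds).and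
    (eventually_mem_nhdsWithin (a := 0) (s := Set.Ioi 0))).exists
  exact ⟨ε, hε, hεa, hεd.le⟩

namespace Matrix

variable {m n : Type*} [Fintype m]

section CommRing

variable {R : Type*} [CommRing R]

/-- The metric `M_P + κ M_Q` of the paper, with `M_Q = Bᵀ Q B` for the Jacobian `B = [Z H]`
of `ζ` with respect to `(x, U)`. -/
def contractionMetric (P : Matrix n n R) (Q H : Matrix m m R) (Z : Matrix m n R) (κ : R) :
    Matrix (n ⊕ m) (n ⊕ m) R :=
  fromBlocks P 0 0 0 + κ • ((fromCols Z H)ᵀ * Q * fromCols Z H)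

theorem fromBlocks_eq_contractionMetric {P : Matrix n n R} {Q H : Matrix m m R}
    {Z : Matrix m n R} {κ : R} (hH : Hᵀ = H) :
    fromBlocks (P + κ • (Zᵀ * Q * Z)) (κ • (Zᵀ * Q * H)) (κ • (H * Q * Z)) (κ • (H * Q * H)) =
      contractionMetric P Q H Z κ := by
  rw [contractionMetric, transpose_fromCols, hH, fromRows_mul, fromRows_mul_fromCols,
    fromBlocks_smul, fromBlocks_add]
  simp

theorem dotProduct_contractionMetric_mulVec [Fintype n] (P : Matrix n n R) (Q H : Matrix m m R)
    (Z : Matrix m n R) (κ : R) (v : n ⊕ m → R) :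
    v ⬝ᵥ contractionMetric P Q H Z κ *ᵥ v =
      v ∘ Sum.inl ⬝ᵥ P *ᵥ (v ∘ Sum.inl) +
        κ * ((Z *ᵥ (v ∘ Sum.inl) + H *ᵥ (v ∘ Sum.inr)) ⬝ᵥ
          Q *ᵥ (Z *ᵥ (v ∘ Sum.inl) + H *ᵥ (v ∘ Sum.inr))) := by
  rw [contractionMetric, add_mulVec, dotProduct_add, smul_mulVec, dotProduct_smul, smul_eq_mul,
    ← mulVec_mulVec, ← mulVec_mulVec, dotProduct_mulVec v (fromCols Z H)ᵀ, vecMul_transpose,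
    fromCols_mulVec, fromBlocks_mulVec, dotProduct_block]
  simp

end CommRing

theorem isSymm_contractionMetric {P : Matrix n n ℝ} {Q : Matrix m m ℝ} (hP : P.IsSymm)
    (hQ : Q.IsSymm) (H : Matrix m m ℝ) (Z : Matrix m n ℝ) (κ : ℝ) :
    (contractionMetric P Q H Z κ).IsSymm := by
  simp only [contractionMetric, IsSymm, transpose_add, transpose_smul, fromBlocks_transpose,
    transpose_mul, transpose_transpose, transpose_zero, hP.eq, hQ.eq, Matrix.mul_assoc]

theorem mulVec_dotProduct_self_le [Fintype n] {Z : Matrix m n ℝ} {c : ℝ}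
    (hZ : ∀ v : n → ℝ, √(∑ i, (Z *ᵥ v) i ^ 2) ≤ c * √(∑ j, v j ^ 2)) (v : n → ℝ) :
    Z *ᵥ v ⬝ᵥ Z *ᵥ v ≤ c ^ 2 * (v ⬝ᵥ v) := by
  simp only [dotProduct, ← sq]
  calc ∑ i, (Z *ᵥ v) i ^ 2 = √(∑ i, (Z *ᵥ v) i ^ 2) ^ 2 := by
        rw [Real.sq_sqrt (by positivity)]
    _ ≤ (c * √(∑ j, v j ^ 2)) ^ 2 := pow_le_pow_left₀ (Real.sqrt_nonneg _) (hZ v) 2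
    _ = c ^ 2 * ∑ j, v j ^ 2 := by rw [mul_pow, Real.sq_sqrt (by positivity)]

variable [DecidableEq m]

theorem PosSemidef.mul_dotProduct_self_le {A : Matrix m m ℝ} {a : ℝ}
    (h : (A - a • 1).PosSemidef) (v : m → ℝ) : a * (v ⬝ᵥ v) ≤ v ⬝ᵥ A *ᵥ v := by
  simpa [sub_mulVec, dotProduct_sub, smul_mulVec] using h.dotProduct_mulVec_nonneg v

theorem PosSemidef.sq_mul_dotProduct_self_le {A : Matrix m m ℝ} {a : ℝ}
    (h : (A - a • 1).PosSemidef) (ha : 0 ≤ a) (v : m → ℝ) :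
    a ^ 2 * (v ⬝ᵥ v) ≤ A *ᵥ v ⬝ᵥ A *ᵥ v := by
  set u := (A - a • 1) *ᵥ v
  have hAv : A *ᵥ v = u + a • v := by simp [u, sub_mulVec, smul_mulVec]
  have hvu : 0 ≤ v ⬝ᵥ u := by simpa using h.dotProduct_mulVec_nonneg v
  have huu : 0 ≤ u ⬝ᵥ u := by simpa using dotProduct_star_self_nonneg u
  rw [hAv]
  simp only [add_dotProduct, dotProduct_add, smul_dotProduct, dotProduct_smul, smul_eq_mul,
    dotProduct_comm u v]
  nlinarith [mul_nonneg ha hvu]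

theorem posSemidef_contractionMetric_sub_smul_one [Fintype n] [DecidableEq n]
    {P : Matrix n n ℝ} {Q H : Matrix m m ℝ} {Z : Matrix m n ℝ} {lamH epsQ epsP c κ ε : ℝ}
    (hP : P.IsSymm) (hQ : Q.IsSymm) (hlamH : 0 ≤ lamH) (hepsQ : 0 ≤ epsQ) (hκ : 0 ≤ κ)
    (hHlb : (H - lamH • 1).PosSemidef) (hQlb : (Q - epsQ • 1).PosSemidef)
    (hPlb : (P - epsP • 1).PosSemidef) (hZ : ∀ x, Z *ᵥ x ⬝ᵥ Z *ᵥ x ≤ c ^ 2 * (x ⬝ᵥ x))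
    (hε : 0 < ε) (hεA : ε < κ * epsQ * lamH ^ 2)
    (hεP : c ^ 2 * κ * epsQ * ε / (κ * epsQ * lamH ^ 2 - ε) + ε ≤ epsP) :
    (contractionMetric P Q H Z κ - ε • 1).PosSemidef := by
  set A := κ * epsQ * lamH ^ 2
  set K := c ^ 2 * κ * epsQ * ε / (A - ε)
  have hA : 0 < A := hε.trans hεA
  refine .of_dotProduct_mulVec_nonneg ?_ fun v => ?_
  · exact isHermitian_iff_isSymm.mpr <|
      (isSymm_contractionMetric hP hQ H Z κ).sub (isSymm_one.smul ε)
  set x := v ∘ Sum.inl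
  set y := v ∘ Sum.inr
  set w := Z *ᵥ x + H *ᵥ y
  have hX : 0 ≤ x ⬝ᵥ x := by simpa using dotProduct_star_self_nonneg x
  have hPx : (K + ε) * (x ⬝ᵥ x) ≤ x ⬝ᵥ P *ᵥ x :=
    (mul_le_mul_of_nonneg_right hεP hX).trans (hPlb.mul_dotProduct_self_le x)
  have hQw : κ * epsQ * (w ⬝ᵥ w) ≤ κ * (w ⬝ᵥ Q *ᵥ w) := by
    rw [mul_assoc]
    exact mul_le_mul_of_nonneg_left (hQlb.mul_dotProduct_self_le w) hκ
  have hw : ε * (y ⬝ᵥ y) - K * (x ⬝ᵥ x) ≤ κ * epsQ * (w ⬝ᵥ w) := by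
    have ht : ε / A < 1 := (div_lt_one hA).mpr hεA
    have hY : κ * epsQ * (ε / A) * (lamH ^ 2 * (y ⬝ᵥ y)) = ε * (y ⬝ᵥ y) := by
      rw [show κ * epsQ * (ε / A) * (lamH ^ 2 * (y ⬝ᵥ y)) = ε / A * A * (y ⬝ᵥ y) by ring,
        div_mul_cancel₀ _ hA.ne']
    have hK : κ * epsQ * (ε / A / (1 - ε / A)) * c ^ 2 = K := by
      rw [one_sub_div hA.ne', div_div_div_cancel_right₀ hA.ne']
      ring
    have hHy := mul_le_mul_of_nonneg_left (hHlb.sq_mul_dotProduct_self_le hlamH y)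
      (by positivity : 0 ≤ κ * epsQ * (ε / A))
    have hZx := mul_le_mul_of_nonneg_left (hZ x)
      (by positivity : 0 ≤ κ * epsQ * (ε / A / (1 - ε / A)))
    have hyoung := mul_le_mul_of_nonneg_left
      (le_dotProduct_add_self_of_lt_one (Z *ᵥ x) (H *ᵥ y) ht) (by positivity : 0 ≤ κ * epsQ)
    rw [← hK, ← hY]
    linarith
  rw [star_trivial, sub_mulVec, dotProduct_sub, smul_mulVec, one_mulVec, dotProduct_smul,
    smul_eq_mul, dotProduct_contractionMetric_mulVec, dotProduct_block]
  linarith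

end Matrix

/-- uniform positive definiteness of the contraction metric
`M = [[P + κ ZᵀQZ, κ ZᵀQH], [κ HQZ, κ HQH]]`. -/
theorem stmt_0 (k n : ℕ)
    (H Q : Matrix (Fin k) (Fin k) ℝ) (P : Matrix (Fin n) (Fin n) ℝ)
    (Z : Matrix (Fin k) (Fin n) ℝ)
    (lamH epsQ epsP c kappa : ℝ)
    (hH : H.IsSymm) (hQ : Q.IsSymm) (hP : P.IsSymm)
    (hlamH : 0 < lamH) (hepsQ : 0 < epsQ) (hepsP : 0 < epsP) (hkappa : 0 < kappa)
    (hHlb : (H - lamH • (1 : Matrix (Fin k) (Fin k) ℝ)).PosSemidef)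
    (hQlb : (Q - epsQ • (1 : Matrix (Fin k) (Fin k) ℝ)).PosSemidef)
    (hPlb : (P - epsP • (1 : Matrix (Fin n) (Fin n) ℝ)).PosSemidef)
    (hZ : ∀ v : Fin n → ℝ,
      Real.sqrt (∑ i, (Z.mulVec v i) ^ 2) ≤ c * Real.sqrt (∑ j, (v j) ^ 2))
    (M : Matrix (Fin n ⊕ Fin k) (Fin n ⊕ Fin k) ℝ)
    (hM : M = Matrix.fromBlocks
      (P + kappa • (Zᵀ * Q * Z)) (kappa • (Zᵀ * Q * H))
      (kappa • (H * Q * Z)) (kappa • (H * Q * H))) :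
    M.PosDef ∧
      ∀ eps : ℝ, 0 < eps → eps < kappa * epsQ * lamH ^ 2 →
        c ^ 2 * kappa * epsQ * eps / (kappa * epsQ * lamH ^ 2 - eps) + eps ≤ epsP →
        (M - eps • (1 : Matrix (Fin n ⊕ Fin k) (Fin n ⊕ Fin k) ℝ)).PosSemidef := by
  rw [hM, fromBlocks_eq_contractionMetric hH.eq]
  have hbound : ∀ eps : ℝ, 0 < eps → eps < kappa * epsQ * lamH ^ 2 →
      c ^ 2 * kappa * epsQ * eps / (kappa * epsQ * lamH ^ 2 - eps) + eps ≤ epsP →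
      (contractionMetric P Q H Z kappa - eps • 1).PosSemidef := fun _ =>
    posSemidef_contractionMetric_sub_smul_one hP hQ hlamH.le hepsQ.le hkappa.le hHlb hQlb hPlb
      (mulVec_dotProduct_self_le hZ)
  refine ⟨?_, hbound⟩
  obtain ⟨eps, heps, hepsA, hepsP'⟩ := exists_pos_mul_div_sub_add_le
    (kappa * epsQ * lamH ^ 2) (c ^ 2 * kappa * epsQ) (by positivity) hepsP
  simpa using PosDef.posSemidef_add (hbound eps heps hepsA hepsP') (PosDef.one.smul heps)
end

section
/- Let P be symmetric positive definite with p_min·I ⪯ P ⪯ p_max·I, let F be an n×(hm) matrix with ‖F‖ ≤ c_f, let Z be an (hm)×n matrix with ‖Z‖ ≤ c_z, let H be symmetric with H ⪰ λ_H·I, and let β_p > 0 satisfy 2·c_f·c_z·p_max ≤ β_p·p_min·λ_H. Then P·F·H⁻¹·Z + (P·F·H⁻¹·Z)ᵀ ⪯ β_p·P. -/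
/-!
With `A = P F H⁻¹ Z` and `P` symmetric, `xᵀ (A + Aᵀ) x = 2 ⟪P x, F H⁻¹ Z x⟫`, so by Cauchy–Schwarz
it is at most `2 ‖P x‖ ‖F H⁻¹ Z x‖ ≤ 2 p_max c_f c_z λ_H⁻¹ ‖x‖² ≤ β_p p_min ‖x‖² ≤ β_p xᵀ P x`.
The bound `‖P x‖ ≤ p_max ‖x‖` comes from the square root `S` of `P`, since
`‖S x‖² = xᵀ P x ≤ p_max ‖x‖²`; the bound `‖H⁻¹ z‖ ≤ λ_H⁻¹ ‖z‖` from
`λ_H ‖w‖² ≤ wᵀ H w ≤ ‖w‖ ‖H w‖` at `w = H⁻¹ z`.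
-/

open Matrix WithLp

namespace Matrix

variable {ι : Type*}

lemma PosSemidef.of_sub_smul_one [DecidableEq ι] {A : Matrix ι ι ℝ} {c : ℝ} (hc : 0 ≤ c)
    (h : (A - c • 1).PosSemidef) : A.PosSemidef := by
  simpa using h.add (PosSemidef.one.smul hc)

lemma PosDef.of_sub_smul_one [DecidableEq ι] {A : Matrix ι ι ℝ} {c : ℝ} (hc : 0 < c)
    (h : (A - c • 1).PosSemidef) : A.PosDef := by
  simpa using (PosDef.one.smul hc).add_posSemidef h

variable [Fintype ι]

lemma norm_toLp_eq_sqrt_sum_sq (v : ι → ℝ) : ‖toLp 2 v‖ = √(∑ i, v i ^ 2) := by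
  simp [EuclideanSpace.norm_eq]

lemma dotProduct_self_eq_norm_toLp_sq (v : ι → ℝ) : v ⬝ᵥ v = ‖toLp 2 v‖ ^ 2 := by
  rw [← real_inner_self_eq_norm_sq, EuclideanSpace.inner_toLp_toLp, star_trivial]

lemma abs_dotProduct_le_norm_toLp_mul_norm_toLp (v w : ι → ℝ) :
    |v ⬝ᵥ w| ≤ ‖toLp 2 v‖ * ‖toLp 2 w‖ := by
  simpa [EuclideanSpace.inner_toLp_toLp, dotProduct_comm] using
    abs_real_inner_le_norm (toLp 2 v) (toLp 2 w)

lemma dotProduct_mul_mulVec_of_isHermitian {P B : Matrix ι ι ℝ} (hP : P.IsHermitian) (x : ι → ℝ) :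
    x ⬝ᵥ (P * B) *ᵥ x = (P *ᵥ x) ⬝ᵥ (B *ᵥ x) := by
  rw [← mulVec_mulVec, dotProduct_mulVec, ← mulVec_transpose,
    ← conjTranspose_eq_transpose_of_trivial, hP.eq]

lemma posSemidef_smul_sub_add_transpose {P A : Matrix ι ι ℝ} {β : ℝ} (hP : P.IsHermitian)
    (h : ∀ x, 2 * (x ⬝ᵥ A *ᵥ x) ≤ β * (x ⬝ᵥ P *ᵥ x)) : (β • P - (A + Aᵀ)).PosSemidef := by
  refine .of_dotProduct_mulVec_nonneg ?_ fun x => ?_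
  · simp only [IsHermitian, conjTranspose_eq_transpose_of_trivial] at hP ⊢
    simp [hP, add_comm]
  · have htranspose : x ⬝ᵥ Aᵀ *ᵥ x = x ⬝ᵥ A *ᵥ x := by
      rw [mulVec_transpose, dotProduct_comm, dotProduct_mulVec]
    simp only [star_trivial, sub_mulVec, add_mulVec, smul_mulVec, dotProduct_sub, dotProduct_add,
      dotProduct_smul, smul_eq_mul, htranspose]
    linarith [h x]

variable [DecidableEq ι] {A : Matrix ι ι ℝ} {c : ℝ}

lemma mul_norm_sq_le_dotProduct_mulVec (h : (A - c • 1).PosSemidef) (v : ι → ℝ) :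
    c * ‖toLp 2 v‖ ^ 2 ≤ v ⬝ᵥ A *ᵥ v := by
  have := h.dotProduct_mulVec_nonneg v
  simp only [star_trivial, sub_mulVec, dotProduct_sub, smul_mulVec, one_mulVec, dotProduct_smul,
    smul_eq_mul, dotProduct_self_eq_norm_toLp_sq] at this
  linarith

lemma dotProduct_mulVec_le_mul_norm_sq (h : (c • 1 - A).PosSemidef) (v : ι → ℝ) :
    v ⬝ᵥ A *ᵥ v ≤ c * ‖toLp 2 v‖ ^ 2 := by
  have := h.dotProduct_mulVec_nonneg v
  simp only [star_trivial, sub_mulVec, dotProduct_sub, smul_mulVec, one_mulVec, dotProduct_smul,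
    smul_eq_mul, dotProduct_self_eq_norm_toLp_sq] at this
  linarith

open scoped MatrixOrder in
lemma norm_mulVec_le_of_posSemidef (hA : A.PosSemidef) (h : (c • 1 - A).PosSemidef) (v : ι → ℝ) :
    ‖toLp 2 (A *ᵥ v)‖ ≤ c * ‖toLp 2 v‖ := by
  set S := CFC.sqrt A
  have hS : S.IsHermitian := (CFC.sqrt_nonneg A).posSemidef.isHermitian
  have hSS : S * S = A := CFC.sqrt_mul_sqrt_self A hA.nonneg
  have hS_sq (u : ι → ℝ) : ‖toLp 2 (S *ᵥ u)‖ ^ 2 ≤ c * ‖toLp 2 u‖ ^ 2 := by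
    rw [← dotProduct_self_eq_norm_toLp_sq, ← dotProduct_mul_mulVec_of_isHermitian hS, hSS]
    exact dotProduct_mulVec_le_mul_norm_sq h u
  rcases le_or_gt 0 c with hc | hc
  · have hS_le (u : ι → ℝ) : ‖toLp 2 (S *ᵥ u)‖ ≤ √c * ‖toLp 2 u‖ := by
      rw [← Real.sqrt_sq (norm_nonneg (toLp 2 (S *ᵥ u))), ← Real.sqrt_sq (norm_nonneg (toLp 2 u)),
        ← Real.sqrt_mul hc]
      exact Real.sqrt_le_sqrt (hS_sq u)
    calc ‖toLp 2 (A *ᵥ v)‖ = ‖toLp 2 (S *ᵥ S *ᵥ v)‖ := by rw [mulVec_mulVec, hSS]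
      _ ≤ √c * ‖toLp 2 (S *ᵥ v)‖ := hS_le _
      _ ≤ √c * (√c * ‖toLp 2 v‖) := by gcongr; exact hS_le v
      _ = c * ‖toLp 2 v‖ := by rw [← mul_assoc, Real.mul_self_sqrt hc]
  · have hv : ‖toLp 2 v‖ ^ 2 = 0 := by
      nlinarith [(sq_nonneg _).trans (hS_sq v), sq_nonneg ‖toLp 2 v‖]
    simp_all

lemma mul_norm_le_norm_mulVec (h : (A - c • 1).PosSemidef) (w : ι → ℝ) :
    c * ‖toLp 2 w‖ ≤ ‖toLp 2 (A *ᵥ w)‖ := by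
  rcases (norm_nonneg (toLp 2 w)).eq_or_lt with hw | hw
  · rw [← hw, mul_zero]
    exact norm_nonneg _
  refine le_of_mul_le_mul_right ?_ hw
  calc c * ‖toLp 2 w‖ * ‖toLp 2 w‖ = c * ‖toLp 2 w‖ ^ 2 := by ring
    _ ≤ w ⬝ᵥ A *ᵥ w := mul_norm_sq_le_dotProduct_mulVec h w
    _ ≤ ‖toLp 2 w‖ * ‖toLp 2 (A *ᵥ w)‖ :=
      (le_abs_self _).trans (abs_dotProduct_le_norm_toLp_mul_norm_toLp _ _)
    _ = ‖toLp 2 (A *ᵥ w)‖ * ‖toLp 2 w‖ := mul_comm _ _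

lemma norm_inv_mulVec_le (hc : 0 < c) (h : (A - c • 1).PosSemidef) (z : ι → ℝ) :
    ‖toLp 2 (A⁻¹ *ᵥ z)‖ ≤ c⁻¹ * ‖toLp 2 z‖ := by
  have hA : IsUnit A.det := (isUnit_iff_isUnit_det A).mp (PosDef.of_sub_smul_one hc h).isUnit
  rw [le_inv_mul_iff₀ hc]
  simpa [mulVec_mulVec, mul_nonsing_inv _ hA] using mul_norm_le_norm_mulVec h (A⁻¹ *ᵥ z)

lemma norm_mulVec_inv_mulVec_mulVec_le {κ μ : Type*} [Fintype κ] [Fintype μ] {F : Matrix μ ι ℝ}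
    {Z : Matrix ι κ ℝ} {a b : ℝ} (ha : 0 ≤ a) (hc : 0 < c)
    (hF : ∀ v, ‖toLp 2 (F *ᵥ v)‖ ≤ a * ‖toLp 2 v‖) (h : (A - c • 1).PosSemidef)
    (hZ : ∀ v, ‖toLp 2 (Z *ᵥ v)‖ ≤ b * ‖toLp 2 v‖) (x : κ → ℝ) :
    ‖toLp 2 (F *ᵥ A⁻¹ *ᵥ Z *ᵥ x)‖ ≤ a * b / c * ‖toLp 2 x‖ :=
  calc _ ≤ a * ‖toLp 2 (A⁻¹ *ᵥ Z *ᵥ x)‖ := hF _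
    _ ≤ a * (c⁻¹ * (b * ‖toLp 2 x‖)) := by
      gcongr
      exact (norm_inv_mulVec_le hc h _).trans (by gcongr; exact hZ x)
    _ = _ := by ring

end Matrix

theorem stmt_10_general (n k : ℕ)
    (P : Matrix (Fin n) (Fin n) ℝ) (F : Matrix (Fin n) (Fin k) ℝ)
    (Z : Matrix (Fin k) (Fin n) ℝ) (H : Matrix (Fin k) (Fin k) ℝ)
    (pmin pmax cf cz lamH betap : ℝ)
    (hpmin : 0 < pmin) (hlamH : 0 < lamH) (hbetap : 0 < betap)
    (hPlb : (P - pmin • (1 : Matrix (Fin n) (Fin n) ℝ)).PosSemidef)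
    (hPub : (pmax • (1 : Matrix (Fin n) (Fin n) ℝ) - P).PosSemidef)
    (hF : ∀ v : Fin k → ℝ,
      Real.sqrt (∑ i, (F.mulVec v i) ^ 2) ≤ cf * Real.sqrt (∑ j, (v j) ^ 2))
    (hZ : ∀ v : Fin n → ℝ,
      Real.sqrt (∑ i, (Z.mulVec v i) ^ 2) ≤ cz * Real.sqrt (∑ j, (v j) ^ 2))
    (hHlb : (H - lamH • (1 : Matrix (Fin k) (Fin k) ℝ)).PosSemidef)
    (hscalar : 2 * cf * cz * pmax ≤ betap * pmin * lamH) :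
    (betap • P - (P * F * H⁻¹ * Z + (P * F * H⁻¹ * Z)ᵀ)).PosSemidef := by
  simp only [← norm_toLp_eq_sqrt_sum_sq] at hF hZ
  have hP : P.PosSemidef := .of_sub_smul_one hpmin.le hPlb
  -- `cf < 0` is possible only for `k = 0`; a nonnegative substitute keeps the norm bounds monotone.
  obtain ⟨c, hc, hFc, hscalar'⟩ : ∃ c, 0 ≤ c ∧ (∀ v, ‖toLp 2 (F *ᵥ v)‖ ≤ c * ‖toLp 2 v‖) ∧
      2 * c * cz * pmax / lamH ≤ betap * pmin := by
    rcases le_total 0 cf with hcf | hcf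
    · exact ⟨cf, hcf, hF, by rwa [div_le_iff₀ hlamH]⟩
    · refine ⟨0, le_rfl, fun v => (hF v).trans (by gcongr), by simp; positivity⟩
  refine posSemidef_smul_sub_add_transpose hP.isHermitian fun x => ?_
  have hPx := norm_mulVec_le_of_posSemidef hP hPub x
  have hy := norm_mulVec_inv_mulVec_mulVec_le hc hlamH hFc hHlb hZ x
  calc 2 * (x ⬝ᵥ (P * F * H⁻¹ * Z) *ᵥ x) = 2 * ((P *ᵥ x) ⬝ᵥ (F *ᵥ H⁻¹ *ᵥ Z *ᵥ x)) := by
        rw [Matrix.mul_assoc, Matrix.mul_assoc, dotProduct_mul_mulVec_of_isHermitian hP.isHermitian,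
          ← mulVec_mulVec, ← mulVec_mulVec]
    _ ≤ 2 * (‖toLp 2 (P *ᵥ x)‖ * ‖toLp 2 (F *ᵥ H⁻¹ *ᵥ Z *ᵥ x)‖) := by
        gcongr
        exact (le_abs_self _).trans (abs_dotProduct_le_norm_toLp_mul_norm_toLp _ _)
    _ ≤ 2 * (pmax * ‖toLp 2 x‖ * (c * cz / lamH * ‖toLp 2 x‖)) := by
        gcongr 2 * ?_
        exact mul_le_mul hPx hy (norm_nonneg _) ((norm_nonneg _).trans hPx)
    _ = 2 * c * cz * pmax / lamH * ‖toLp 2 x‖ ^ 2 := by ring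
    _ ≤ betap * pmin * ‖toLp 2 x‖ ^ 2 := by gcongr
    _ ≤ betap * (x ⬝ᵥ P *ᵥ x) := by
        rw [mul_assoc]
        gcongr
        exact mul_norm_sq_le_dotProduct_mulVec hPlb x

/-- the scalar condition `2 c_f c_z p_max ≤ β_p p_min λ_H` guarantees
`⟨P F H⁻¹ Z⟩ ⪯ β_p P`. -/
theorem stmt_10 (n k : ℕ)
    (P : Matrix (Fin n) (Fin n) ℝ) (F : Matrix (Fin n) (Fin k) ℝ)
    (Z : Matrix (Fin k) (Fin n) ℝ) (H : Matrix (Fin k) (Fin k) ℝ)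
    (pmin pmax cf cz lamH betap : ℝ)
    (hP : P.IsSymm) (hPpd : P.PosDef) (hH : H.IsSymm)
    (hpmin : 0 < pmin) (hlamH : 0 < lamH) (hbetap : 0 < betap)
    (hPlb : (P - pmin • (1 : Matrix (Fin n) (Fin n) ℝ)).PosSemidef)
    (hPub : (pmax • (1 : Matrix (Fin n) (Fin n) ℝ) - P).PosSemidef)
    (hF : ∀ v : Fin k → ℝ,
      Real.sqrt (∑ i, (F.mulVec v i) ^ 2) ≤ cf * Real.sqrt (∑ j, (v j) ^ 2))
    (hZ : ∀ v : Fin n → ℝ,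
      Real.sqrt (∑ i, (Z.mulVec v i) ^ 2) ≤ cz * Real.sqrt (∑ j, (v j) ^ 2))
    (hHlb : (H - lamH • (1 : Matrix (Fin k) (Fin k) ℝ)).PosSemidef)
    (hscalar : 2 * cf * cz * pmax ≤ betap * pmin * lamH) :
    (betap • P - (P * F * H⁻¹ * Z + (P * F * H⁻¹ * Z)ᵀ)).PosSemidef :=
  stmt_10_general n k P F Z H pmin pmax cf cz lamH betap hpmin hlamH hbetap hPlb hPub hF hZ hHlb
    hscalar
end

section
/- Let J : ℝ → ℝ^{(hm)×(n+hm)}, Q : ℝ → Sym(hm), A : ℝ → ℝ^{(n+hm)×(n+hm)}, and B : ℝ → ℝ^{(hm)×(hm)} be differentiable, and suppose J'(t) = B(t)·J(t) − J(t)·A(t) + R(t) for some R(t). Define M(t) := J(t)ᵀ·Q(t)·J(t). Then M'(t) + M(t)·A(t) + A(t)ᵀ·M(t) + γ·M(t) = J(t)ᵀ·(Q'(t) + Q(t)·B(t) + B(t)ᵀ·Q(t) + γ·Q(t))·J(t) + J(t)ᵀ Q(t) R(t) + R(t)ᵀ Q(t) J(t) when R(t) is as above; in particular, if J'(t) = B(t)·J(t)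 − J(t)·A(t) (i.e., R = 0), then the pulled-back contraction expression for M equals Jᵀ·(Q' + ⟨Q B⟩ + γ Q)·J. -/
open Matrix

/-! `M = Jᵀ Q J` is differentiated entrywise by the product rule, `M' = J'ᵀ Q J + Jᵀ Q' J + Jᵀ Q J'`.
Substituting `J' = B J - J A + R`, the terms `-(J A)ᵀ Q J = -Aᵀ M` and `-Jᵀ Q J A = -M A` produce the
`A`-part of the contraction operator of `M`, while `(B J)ᵀ Q J + Jᵀ Q B J = Jᵀ (Bᵀ Q + Q B) J` is the
pull-back of the `B`-part of the contraction operator of `Q`; the `γ`-terms cancel. -/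

namespace Matrix

variable {𝕜 𝔸 : Type*} [NontriviallyNormedField 𝕜] [NormedRing 𝔸] [NormedAlgebra 𝕜 𝔸]
  {l m n : Type*}

def HasEntrywiseDerivAt (A : 𝕜 → Matrix m n 𝔸) (A' : Matrix m n 𝔸) (t : 𝕜) : Prop :=
  ∀ i j, HasDerivAt (fun τ => A τ i j) (A' i j) t

theorem HasEntrywiseDerivAt.transpose {A : 𝕜 → Matrix m n 𝔸} {A' : Matrix m n 𝔸} {t : 𝕜}
    (hA : HasEntrywiseDerivAt A A' t) : HasEntrywiseDerivAt (fun τ => (A τ)ᵀ) A'ᵀ t :=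
  fun i j => hA j i

theorem HasEntrywiseDerivAt.mul [Fintype m] {A : 𝕜 → Matrix l m 𝔸} {B : 𝕜 → Matrix m n 𝔸}
    {A' : Matrix l m 𝔸} {B' : Matrix m n 𝔸} {t : 𝕜}
    (hA : HasEntrywiseDerivAt A A' t) (hB : HasEntrywiseDerivAt B B' t) :
    HasEntrywiseDerivAt (fun τ => A τ * B τ) (A' * B t + A t * B') t := by
  intro i j
  simp only [mul_apply, add_apply, ← Finset.sum_add_distrib]
  exact HasDerivAt.fun_sum fun k _ => (hA i k).fun_mul (hB k j)

end Matrix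

theorem Matrix.transpose_mul_mul_intertwining {R : Type*} [CommRing R] {m n : Type*}
    [Fintype m] [Fintype n] (γ : R) (J E : Matrix m n R) (Q Q' B : Matrix m m R)
    (A : Matrix n n R) :
    (B * J - J * A + E)ᵀ * Q * J + Jᵀ * Q' * J + Jᵀ * Q * (B * J - J * A + E)
      = Jᵀ * (Q' + Q * B + Bᵀ * Q + γ • Q) * J + Jᵀ * Q * E + Eᵀ * Q * J
        - (Jᵀ * Q * J * A + Aᵀ * (Jᵀ * Q * J) + γ • (Jᵀ * Q * J)) := by
  simp only [transpose_add, transpose_sub, transpose_mul, Matrix.mul_add, Matrix.add_mul,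
    Matrix.mul_sub, Matrix.sub_mul, Matrix.mul_smul, Matrix.smul_mul, Matrix.mul_assoc]
  abel

theorem stmt_14_general (k N : ℕ) (gamma : ℝ)
    (J : ℝ → Matrix (Fin k) (Fin N) ℝ)
    (Q Q' : ℝ → Matrix (Fin k) (Fin k) ℝ)
    (A : ℝ → Matrix (Fin N) (Fin N) ℝ)
    (B : ℝ → Matrix (Fin k) (Fin k) ℝ)
    (R : ℝ → Matrix (Fin k) (Fin N) ℝ)
    (hJ : ∀ t i j, HasDerivAt (fun τ => J τ i j) ((B t * J t - J t * A t + R t) i j) t)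
    (hQ : ∀ t i j, HasDerivAt (fun τ => Q τ i j) (Q' t i j) t)
    (M : ℝ → Matrix (Fin N) (Fin N) ℝ)
    (hM : M = fun t => (J t)ᵀ * Q t * J t) :
    ∀ t i j,
      HasDerivAt (fun τ => M τ i j)
        (((J t)ᵀ * (Q' t + Q t * B t + (B t)ᵀ * Q t + gamma • Q t) * J t
            + (J t)ᵀ * Q t * R t + (R t)ᵀ * Q t * J t
            - (M t * A t + (A t)ᵀ * M t + gamma • M t)) i j) t := by
  intro t
  subst hM
  have hJt : HasEntrywiseDerivAt J (B t * J t - J t * A t + R t) t := hJ t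
  have hM' := (hJt.transpose.mul (hQ t)).mul hJt
  rwa [Matrix.add_mul, transpose_mul_mul_intertwining gamma] at hM'

/-- pull-back of the contraction operator through an intertwining
Jacobian: if `J' = B J − J A + R` and `M = Jᵀ Q J`, then
`M' + M A + Aᵀ M + γ M = Jᵀ (Q' + Q B + Bᵀ Q + γ Q) J + Jᵀ Q R + Rᵀ Q J`. -/
theorem stmt_14 (k N : ℕ) (gamma : ℝ)
    (J : ℝ → Matrix (Fin k) (Fin N) ℝ)
    (Q Q' : ℝ → Matrix (Fin k) (Fin k) ℝ)
    (A : ℝ → Matrix (Fin N) (Fin N) ℝ)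
    (B : ℝ → Matrix (Fin k) (Fin k) ℝ)
    (R : ℝ → Matrix (Fin k) (Fin N) ℝ)
    (hQsymm : ∀ t, (Q t).IsSymm)
    (hJ : ∀ t i j, HasDerivAt (fun τ => J τ i j) ((B t * J t - J t * A t + R t) i j) t)
    (hQ : ∀ t i j, HasDerivAt (fun τ => Q τ i j) (Q' t i j) t)
    (M : ℝ → Matrix (Fin N) (Fin N) ℝ)
    (hM : M = fun t => (J t)ᵀ * Q t * J t) :
    ∀ t i j,
      HasDerivAt (fun τ => M τ i j)
        (((J t)ᵀ * (Q' t + Q t * B t + (B t)ᵀ * Q t + gamma • Q t) * J t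
            + (J t)ᵀ * Q t * R t + (R t)ᵀ * Q t * J t
            - (M t * A t + (A t)ᵀ * M t + gamma • M t)) i j) t :=
  stmt_14_general k N gamma J Q Q' A B R hJ hQ M hM
end
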